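/- arXiv:2106.14041 — 4 statements merged into one kernel-verified Lean document; each statement's English description precedes it below -/
import Mathlib

section
/- Let F be a field and q ∈ F with q+q^{-1} invertible. In F[z_1,z_2,...][[t]], let Z(t) = ∑_{n≥0} z_n t^n with z_0 = 1. Then Z((q+q^{-1})/(t+t^{-1})) = ∑_{n≥0} z↓_n [2]_q^n t^n, where z↓_0 = 1 and for n ≥ 1, z↓_n = ∑_{ℓ=0}^{⌊(n-1)/2⌋} (-1)^ℓ binom(n-1-ℓ, ℓ) [2]_q^{-2ℓ} z_{n-2ℓ}, and [2]_q = q + q^{-1}. -/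
/-! `u = [2]_q t (1 + t²)⁻¹`, so `u^(n+1) = [2]_q^(n+1) t^(n+1) (1 + t²)^-(n+1)`, and
`(1 + t²)^-(n+1)` is the binomial series `(1 - t)^-(n+1) = ∑ C(n+j, j) t^j` at `t ↦ -t²`.
Hence only the terms `n + 1 = m + 1 - 2ℓ` contribute to the coefficient of `t^(m+1)` in `Z(u)`,
each with `(-1)^ℓ C(m-ℓ, ℓ) [2]_q^(m+1-2ℓ) z_(m+1-2ℓ)`, which is `[2]_q^(m+1) z↓_(m+1)`. -/

noncomputable section

open PowerSeries

variable (F : Type*) [Field F]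

/-- The generators `z_n` of `F[z_1, z_2, …]` (with the convention `z_0 = 1`),
realized inside the polynomial algebra on countably many variables indexed by `ℕ+`. -/
def z : ℕ → MvPolynomial ℕ+ F
  | 0 => 1
  | (n + 1) => MvPolynomial.X ⟨n + 1, Nat.succ_pos n⟩

/-- The elements `z↓_n`:  `z↓_0 = 1` and for `n ≥ 1`,
`z↓_n = ∑_{ℓ=0}^{⌊(n-1)/2⌋} (-1)^ℓ C(n-1-ℓ,ℓ) [2]_q^{-2ℓ} z_{n-2ℓ}`. -/
def zdown (q : F) : ℕ → MvPolynomial ℕ+ F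
  | 0 => 1
  | (n + 1) => ∑ ℓ ∈ Finset.range (n / 2 + 1),
      ((-1 : F) ^ ℓ * (Nat.choose (n - ℓ) ℓ : F) * ((q + q⁻¹)⁻¹) ^ (2 * ℓ)) •
        z F (n + 1 - 2 * ℓ)

/-- The elements `z^∨_n = [2]_q^n ∑_{k=0}^n q^{n-2k} z↓_k z↓_{n-k}`. -/
def zvee (q : F) (n : ℕ) : MvPolynomial ℕ+ F :=
  ((q + q⁻¹) ^ n) • ∑ k ∈ Finset.range (n + 1),
    (q ^ ((n : ℤ) - 2 * (k : ℤ))) • (zdown F q k * zdown F q (n - k))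

/-- The power series expansion of `(q+q⁻¹)·t·(1+t²)⁻¹`, i.e. of `(q+q⁻¹)/(t+t⁻¹)`. -/
def uSeries (q : F) : PowerSeries F :=
  PowerSeries.C (R := F) (q + q⁻¹) * PowerSeries.X * (1 + PowerSeries.X ^ 2)⁻¹

theorem Finset.sum_range_succ_eq_sum_sub_two_mul {M : Type*} [AddCommMonoid M] {m : ℕ}
    {f : ℕ → M} (hf : ∀ n ≤ m, ¬ 2 ∣ m - n → f n = 0) :
    ∑ n ∈ Finset.range (m + 1), f n = ∑ ℓ ∈ Finset.range (m / 2 + 1), f (m - 2 * ℓ) := by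
  rw [← Finset.sum_filter_of_ne (p := fun n => 2 ∣ m - n) fun n hn hfn => by
    by_contra hodd
    exact hfn (hf n (Nat.lt_succ_iff.mp (Finset.mem_range.mp hn)) hodd)]
  symm
  refine Finset.sum_nbij' (fun ℓ => m - 2 * ℓ) (fun n => (m - n) / 2) ?_ ?_ ?_ ?_ fun _ _ => rfl
  all_goals
    intro x hx
    simp only [Finset.mem_filter, Finset.mem_range] at hx ⊢
  · exact ⟨by omega, ⟨x, by omega⟩⟩
  · omega
  · omega
  · obtain ⟨hxm, j, hj⟩ := hx
    omega

theorem one_add_X_sq_pow_mul_expand_rescale_invOneSubPow (n : ℕ) :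
    (1 + X ^ 2 : F⟦X⟧) ^ n * expand 2 two_ne_zero (rescale (-1) (invOneSubPow F n).val) = 1 := by
  have h := congrArg (fun f => expand 2 two_ne_zero (rescale (-1 : F) f)) (invOneSubPow F n).inv_val
  simp only [invOneSubPow_inv_eq_one_sub_pow, map_mul, map_pow, map_sub, map_one,
    rescale_neg_one_X] at h
  simpa [sub_neg_eq_add, add_comm] using h

theorem coeff_inv_one_add_X_sq_pow_succ (n k : ℕ) :
    coeff k ((1 + X ^ 2 : F⟦X⟧)⁻¹ ^ (n + 1)) =
      if 2 ∣ k then (-1) ^ (k / 2) * ((n + k / 2).choose (k / 2) : F) else 0 := by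
  have hinv : (1 + X ^ 2 : F⟦X⟧)⁻¹ ^ (n + 1) =
      expand 2 two_ne_zero (rescale (-1) (invOneSubPow F (n + 1)).val) := by
    refine left_inv_eq_right_inv ?_ (one_add_X_sq_pow_mul_expand_rescale_invOneSubPow F _)
    rw [← mul_pow, PowerSeries.inv_mul_cancel _ (by simp), one_pow]
  rw [hinv, coeff_expand, invOneSubPow_val_succ_eq_mk_add_choose, coeff_rescale, coeff_mk,
    Nat.choose_symm_add]

theorem coeff_succ_uSeries_pow_succ (q : F) {m n : ℕ} (h : n ≤ m) :
    coeff (m + 1) (uSeries F q ^ (n + 1)) =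
      if 2 ∣ m - n then
        (q + q⁻¹) ^ (n + 1) * (-1) ^ ((m - n) / 2) * ((n + (m - n) / 2).choose ((m - n) / 2) : F)
      else 0 := by
  rw [uSeries, mul_pow, mul_pow, ← map_pow, mul_assoc, coeff_C_mul, coeff_X_pow_mul',
    if_pos (by omega), Nat.add_sub_add_right, coeff_inv_one_add_X_sq_pow_succ]
  split_ifs <;> ring

theorem Z_comp_u_eq (q : F) (h2 : q + q⁻¹ ≠ 0) :
    (PowerSeries.mk fun m => ∑ n ∈ Finset.range (m + 1),
        z F n * PowerSeries.coeff (R := _) m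
          ((PowerSeries.map (algebraMap F (MvPolynomial ℕ+ F)) (uSeries F q)) ^ n))
      = PowerSeries.mk fun m => ((q + q⁻¹) ^ m) • zdown F q m := by
  ext (_ | m) : 1
  · simp [z, zdown]
  rw [coeff_mk, coeff_mk, Finset.sum_range_succ', pow_zero, coeff_one, if_neg m.succ_ne_zero,
    mul_zero, add_zero]
  simp_rw [← map_pow, coeff_map]
  rw [Finset.sum_range_succ_eq_sum_sub_two_mul, zdown, Finset.smul_sum]
  swap
  · intro n hn hodd
    rw [coeff_succ_uSeries_pow_succ F q hn, if_neg hodd, map_zero, mul_zero]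
  refine Finset.sum_congr rfl fun ℓ hℓ => ?_
  have hℓm : 2 * ℓ ≤ m := by
    have := Finset.mem_range.mp hℓ
    omega
  have hpow : (q + q⁻¹) ^ (m + 1) * (q + q⁻¹)⁻¹ ^ (2 * ℓ) = (q + q⁻¹) ^ (m + 1 - 2 * ℓ) := by
    rw [inv_pow, ← pow_sub₀ _ h2 (by omega)]
  rw [coeff_succ_uSeries_pow_succ F q (Nat.sub_le m _), Nat.sub_sub_self hℓm, if_pos ⟨ℓ, rfl⟩,
    Nat.mul_div_cancel_left ℓ two_pos, show m - 2 * ℓ + ℓ = m - ℓ by omega,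
    show m - 2 * ℓ + 1 = m + 1 - 2 * ℓ by omega, ← hpow, smul_smul, Algebra.smul_def, mul_comm]
  congr 2
  ring
end
end

section
/- With notation as in the previous context, define S(t) = (q+q^{-1})t(q+q^{-1}t²)^{-1} and T(t) = (q+q^{-1})t(q^{-1}+qt²)^{-1} as formal power series (these are the expansions of (q+q^{-1})/(q^{-1}t+qt^{-1}) and (q+q^{-1})/(qt+q^{-1}t^{-1})). Then Z(S) = ∑_{n≥0} z↓_n q^{-n} [2]_q^n t^n and Z(T) = ∑_{n≥0} z↓_n q^n [2]_q^n t^n, where z↓_n is defined by z↓_0 = 1 and z↓_n = ∑_{ℓ=0}^{⌊(n-1)/2⌋} (-1)^ℓ binom(n-1-ℓ, ℓ) [2]_q^{-2ℓ} z_{n-2ℓ} for n ≥ 1. -/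
noncomputable section

open PowerSeries

variable (F : Type*) [Field F]

/-- The power series expansion of `(q+q⁻¹)·t·(q+q⁻¹t²)⁻¹`, i.e. of
`S = (q+q⁻¹)/(q⁻¹t+qt⁻¹)`. -/
def Sseries (q : F) : PowerSeries F :=
  PowerSeries.C (q + q⁻¹) * PowerSeries.X *
    (PowerSeries.C q + PowerSeries.C q⁻¹ * PowerSeries.X ^ 2)⁻¹

/-- The power series expansion of `(q+q⁻¹)·t·(q⁻¹+qt²)⁻¹`, i.e. of
`T = (q+q⁻¹)/(qt+q⁻¹t⁻¹)`. -/
def Tseries (q : F) : PowerSeries F :=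
  PowerSeries.C (q + q⁻¹) * PowerSeries.X *
    (PowerSeries.C q⁻¹ + PowerSeries.C q * PowerSeries.X ^ 2)⁻¹

/-!
With `[2] = q + q⁻¹`, pulling the constant term out of the denominator puts both series in the
form `λ[2]·t·(1 + λ²t²)⁻¹`, with `λ = q⁻¹` for `S` and `λ = q` for `T`. Since `(1 + λ²t²)⁻ⁿ` is
the binomial series `(1 - t)⁻ⁿ` rescaled by `-λ²` and expanded `t ↦ t²`, the coefficient of
`t^(n+2ℓ)` in the `n`-th power is `(λ[2])ⁿ (-λ²)^ℓ C(n-1+ℓ, ℓ)`, and all other coefficients of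
degree `≥ n` vanish by parity. Collecting the terms `z_{m-2ℓ}` gives exactly `λ^m [2]^m z↓_m`.
-/

namespace PowerSeries
variable {R : Type*} [CommRing R]

def invOneAddSqPow (a : R) (n : ℕ) : R⟦X⟧ :=
  expand 2 two_ne_zero (rescale (-a) (invOneSubPow R n).val)

theorem invOneAddSqPow_mul (a : R) (n : ℕ) :
    invOneAddSqPow a n * (1 + C a * X ^ 2) ^ n = 1 := by
  let φ : R⟦X⟧ →+* R⟦X⟧ := (expand 2 two_ne_zero).toRingHom.comp (rescale (-a))
  have hX : φ (1 - X) = 1 + C a * X ^ 2 := by simp [φ, rescale_X, expand_C, sub_eq_add_neg]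
  have h := congrArg φ (invOneSubPow R n).val_inv
  rwa [invOneSubPow_inv_eq_one_sub_pow, map_mul, map_pow, hX, map_one] at h

theorem coeff_two_mul_invOneAddSqPow_succ (a : R) (n ℓ : ℕ) :
    coeff (2 * ℓ) (invOneAddSqPow a (n + 1)) = (-a) ^ ℓ * (n + ℓ).choose ℓ := by
  rw [invOneAddSqPow, coeff_expand_mul, coeff_rescale, invOneSubPow_val_succ_eq_mk_add_choose,
    coeff_mk, Nat.choose_symm_add]

theorem coeff_invOneAddSqPow_of_odd (a : R) (n : ℕ) {k : ℕ} (hk : Odd k) :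
    coeff k (invOneAddSqPow a n) = 0 :=
  coeff_expand_of_not_dvd _ _ _ (Nat.not_even_iff_odd.2 hk ∘ even_iff_two_dvd.2)

theorem coeff_add_two_mul_C_mul_X_pow_mul_invOneAddSqPow (a c : R) (n ℓ : ℕ) :
    coeff (n + 1 + 2 * ℓ) (C (c ^ (n + 1)) * X ^ (n + 1) * invOneAddSqPow a (n + 1)) =
      c ^ (n + 1) * (-a) ^ ℓ * (n + ℓ).choose ℓ := by
  rw [mul_assoc, coeff_C_mul, add_comm (n + 1), coeff_X_pow_mul, coeff_two_mul_invOneAddSqPow_succ,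
    mul_assoc]

theorem coeff_C_mul_X_pow_mul_invOneAddSqPow_eq_zero (a c : R) {n m : ℕ}
    (h : ∀ ℓ, n + 2 * ℓ ≠ m) :
    coeff m (C c * X ^ n * invOneAddSqPow a n) = 0 := by
  rw [mul_assoc, coeff_C_mul, coeff_X_pow_mul', ite_eq_right_iff.2, mul_zero]
  intro hnm
  refine coeff_invOneAddSqPow_of_odd a n (Nat.odd_iff.2 ?_)
  by_contra hev
  exact h ((m - n) / 2) (by omega)

theorem C_mul_X_mul_inv_pow {K : Type*} [Field K] (b u v : K) (hu : u ≠ 0) (n : ℕ) :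
    (C b * X * (C u + C v * X ^ 2)⁻¹) ^ n =
      C ((b / u) ^ n) * X ^ n * invOneAddSqPow (v / u) n := by
  set U : K⟦X⟧ := C u + C v * X ^ 2
  have hU : constantCoeff U ≠ 0 := by simpa [U] using hu
  have hU_eq : U = C u * (1 + C (v / u) * X ^ 2) := by
    simp only [U, mul_add, mul_one, ← mul_assoc, ← map_mul, mul_div_cancel₀ v hu]
  apply mul_right_cancel₀ (pow_ne_zero n (ne_of_apply_ne constantCoeff (by simpa using hU)))
  calc (C b * X * U⁻¹) ^ n * U ^ n = (C b * X) ^ n := by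
        rw [← mul_pow, mul_assoc, PowerSeries.inv_mul_cancel U hU, mul_one]
    _ = C ((b / u) ^ n * u ^ n) * X ^ n *
          (invOneAddSqPow (v / u) n * (1 + C (v / u) * X ^ 2) ^ n) := by
        rw [invOneAddSqPow_mul, div_pow, div_mul_cancel₀ _ (pow_ne_zero n hu), mul_one, mul_pow,
          map_pow]
    _ = _ := by simp only [hU_eq, mul_pow, map_mul, map_pow]; ring

end PowerSeries

theorem Finset.sum_range_succ_eq_sum_range_sub_two_mul {M : Type*} [AddCommMonoid M]
    (f : ℕ → M) (m : ℕ) (hf : ∀ n ≤ m, (∀ ℓ, n + 2 * ℓ ≠ m) → f n = 0) :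
    ∑ n ∈ Finset.range (m + 1), f n = ∑ ℓ ∈ Finset.range (m / 2 + 1), f (m - 2 * ℓ) := by
  refine (Finset.sum_of_injOn (fun ℓ => m - 2 * ℓ) ?_ ?_ ?_ fun _ _ => rfl).symm
  · intro x hx y hy h
    simp only [Finset.coe_range, Set.mem_Iio] at hx hy h
    omega
  · intro x hx
    simp only [Finset.coe_range, Set.mem_Iio] at hx ⊢
    omega
  · intro n hn hnot
    simp only [Finset.mem_range] at hn
    refine hf n (by omega) fun ℓ h => hnot ⟨ℓ, ?_, ?_⟩
    · simp only [Finset.coe_range, Set.mem_Iio]; omega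
    · simp only; omega

section Composition

variable {K : Type*} [Field K]

/-- The paper's `Z(P) = ∑ₙ zₙ Pⁿ`; truncating at `n ≤ m` is exact only when `P` has no
constant term. -/
def zComp (P : K⟦X⟧) : (MvPolynomial ℕ+ K)⟦X⟧ :=
  mk fun m => ∑ n ∈ Finset.range (m + 1),
    z K n * coeff m (map (algebraMap K (MvPolynomial ℕ+ K)) P ^ n)

theorem zComp_eq_mk_smul_zdown (q l : K) (h2 : q + q⁻¹ ≠ 0) (P : K⟦X⟧)
    (hP : ∀ n, P ^ n = C ((l * (q + q⁻¹)) ^ n) * X ^ n * invOneAddSqPow (l ^ 2) n) :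
    zComp P = mk fun m => (l ^ m * (q + q⁻¹) ^ m) • zdown K q m := by
  ext m : 1
  simp only [zComp, coeff_mk, ← map_pow, coeff_map, MvPolynomial.algebraMap_eq, mul_comm (z K _),
    MvPolynomial.C_mul']
  rcases m with _ | M
  · simp [z, zdown]
  rw [Finset.sum_range_succ', pow_zero, coeff_one, if_neg M.succ_ne_zero, zero_smul, add_zero,
    Finset.sum_range_succ_eq_sum_range_sub_two_mul, zdown, Finset.smul_sum]
  · refine Finset.sum_congr rfl fun ℓ hℓ => ?_
    rw [Finset.mem_range] at hℓ
    obtain ⟨k, rfl⟩ : ∃ k, M = k + 2 * ℓ := ⟨M - 2 * ℓ, by omega⟩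
    rw [smul_smul, Nat.add_sub_cancel, show k + 2 * ℓ + 1 - 2 * ℓ = k + 1 by omega,
      show k + 2 * ℓ - ℓ = k + ℓ by omega, hP, show k + 2 * ℓ + 1 = k + 1 + 2 * ℓ by ring,
      coeff_add_two_mul_C_mul_X_pow_mul_invOneAddSqPow]
    congr 1
    generalize q + q⁻¹ = t at h2 ⊢
    rw [inv_pow]
    field_simp
    ring
  · intro n _ hn
    rw [hP, coeff_C_mul_X_pow_mul_invOneAddSqPow_eq_zero _ _ fun ℓ => by have := hn ℓ; omega,
      zero_smul]

end Composition

theorem Z_comp_S_and_T (q : F) (h2 : q + q⁻¹ ≠ 0) :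
    ((PowerSeries.mk fun m => ∑ n ∈ Finset.range (m + 1),
        z F n * PowerSeries.coeff m
          ((PowerSeries.map (algebraMap F (MvPolynomial ℕ+ F)) (Sseries F q)) ^ n))
      = PowerSeries.mk fun m => (q⁻¹ ^ m * (q + q⁻¹) ^ m) • zdown F q m) ∧
    ((PowerSeries.mk fun m => ∑ n ∈ Finset.range (m + 1),
        z F n * PowerSeries.coeff m
          ((PowerSeries.map (algebraMap F (MvPolynomial ℕ+ F)) (Tseries F q)) ^ n))
      = PowerSeries.mk fun m => (q ^ m * (q + q⁻¹) ^ m) • zdown F q m) := by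
  have hq : q ≠ 0 := by
    rintro rfl
    simp at h2
  refine ⟨zComp_eq_mk_smul_zdown q q⁻¹ h2 _ fun n => ?_,
    zComp_eq_mk_smul_zdown q q h2 _ fun n => ?_⟩
  · rw [Sseries, C_mul_X_mul_inv_pow _ _ _ hq, div_eq_inv_mul, div_eq_inv_mul, sq]
  · rw [Tseries, C_mul_X_mul_inv_pow _ _ _ (inv_ne_zero hq), div_inv_eq_mul, div_inv_eq_mul,
      mul_comm (q + q⁻¹), sq]
end
end

section
/- For n ≥ 1, the element z^∨_n lies in the F-span of monomials z_λ of weighted degree at most n (where z_k has weight k), its constant term is 0, and the coefficient of the monomial z_n in z^∨_n equals (q+q^{-1})^n (q^n + q^{-n}). -/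
/-!
Each `z↓_k` is a combination of `z_k, z_{k-2}, …` whose leading coefficient is `1`, so it has
weighted degree at most `k` and, for `k ≥ 1`, no constant term. Hence every product
`z↓_k z↓_{n-k}` has weighted degree at most `n` and no constant term. For `0 < k < n` both
factors lack a constant term, so the product has no linear part either; the coefficient of `z_n`
therefore only comes from `k = 0` and `k = n`, which contribute `q^n` and `q^{-n}`.
-/

noncomputable section

open PowerSeries

variable (F : Type*) [Field F]

namespace MvPolynomial

section WeightedDegree

open scoped Pointwise

variable {σ : Type*} (R : Type*) [CommSemiring R]

abbrev weightedDegreeLE (w : σ → ℕ) (n : ℕ) : Submodule R (MvPolynomial σ R) :=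
  restrictSupport R {d | Finsupp.weight w d ≤ n}

variable {R} {w : σ → ℕ}

theorem weightedDegreeLE_mono {m n : ℕ} (h : m ≤ n) :
    weightedDegreeLE R w m ≤ weightedDegreeLE R w n :=
  restrictSupport_mono R fun _ hd => le_trans hd h

theorem one_mem_weightedDegreeLE (n : ℕ) : (1 : MvPolynomial σ R) ∈ weightedDegreeLE R w n :=
  (monomial_mem_restrictSupport (r := (1 : R))).2 (Or.inl (by simp))

theorem X_mem_weightedDegreeLE (i : σ) :
    (X i : MvPolynomial σ R) ∈ weightedDegreeLE R w (w i) :=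
  (monomial_mem_restrictSupport (r := (1 : R))).2 (Or.inl (by simp [Finsupp.weight_single]))

theorem mul_mem_weightedDegreeLE {p r : MvPolynomial σ R} {m n : ℕ}
    (hp : p ∈ weightedDegreeLE R w m) (hr : r ∈ weightedDegreeLE R w n) :
    p * r ∈ weightedDegreeLE R w (m + n) := by
  have hadd : {d : σ →₀ ℕ | Finsupp.weight w d ≤ m} + {d | Finsupp.weight w d ≤ n} ⊆
      {d | Finsupp.weight w d ≤ m + n} := by
    rintro _ ⟨a, ha, b, hb, rfl⟩
    simpa using add_le_add ha hb
  refine restrictSupport_mono R hadd ?_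
  rw [restrictSupport_add]
  exact Submodule.mul_mem_mul hp hr

end WeightedDegree

theorem coeff_single_one_mul {σ R : Type*} [CommSemiring R] (i : σ) (p r : MvPolynomial σ R) :
    coeff (Finsupp.single i 1) (p * r) =
      coeff (Finsupp.single i 1) p * constantCoeff r +
        constantCoeff p * coeff (Finsupp.single i 1) r := by
  classical
  rw [coeff_mul, Finsupp.antidiagonal_single]
  simp [Finset.Nat.antidiagonal_succ, constantCoeff_eq, add_comm]

end MvPolynomial

open MvPolynomial

theorem z_coe (i : ℕ+) : z F i = X i := by
  obtain ⟨_ | n, hn⟩ := i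
  · exact absurd hn (Nat.lt_irrefl 0)
  · rfl

theorem z_mem_weightedDegreeLE (k : ℕ) : z F k ∈ weightedDegreeLE F PNat.val k := by
  cases k with
  | zero => exact one_mem_weightedDegreeLE 0
  | succ m => exact X_mem_weightedDegreeLE _

theorem constantCoeff_z_of_pos {k : ℕ} (hk : 0 < k) : constantCoeff (z F k) = 0 := by
  lift k to ℕ+ using hk
  rw [z_coe, constantCoeff_X]

theorem coeff_single_one_z (i : ℕ+) (k : ℕ) :
    coeff (Finsupp.single i 1) (z F k) = if (i : ℕ) = k then 1 else 0 := by
  rcases Nat.eq_zero_or_pos k with rfl | hk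
  · simp [z, MvPolynomial.coeff_one, (Finsupp.single_ne_zero.2 one_ne_zero).symm]
  · lift k to ℕ+ using hk
    simp [z_coe, MvPolynomial.coeff_X, eq_comm, Finsupp.single_left_inj one_ne_zero]

section

variable {F} (q : F)

@[simp]
theorem zdown_zero : zdown F q 0 = 1 := rfl

theorem zdown_mem_weightedDegreeLE (k : ℕ) : zdown F q k ∈ weightedDegreeLE F PNat.val k := by
  cases k with
  | zero => exact one_mem_weightedDegreeLE 0
  | succ n =>
    refine Submodule.sum_mem _ fun ℓ _ => Submodule.smul_mem _ _ ?_
    exact weightedDegreeLE_mono (Nat.sub_le _ _) (z_mem_weightedDegreeLE F _)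

theorem constantCoeff_zdown_of_pos {k : ℕ} (hk : 0 < k) : constantCoeff (zdown F q k) = 0 := by
  cases k with
  | zero => exact absurd hk (Nat.lt_irrefl 0)
  | succ n =>
    rw [zdown, map_sum]
    refine Finset.sum_eq_zero fun ℓ hℓ => ?_
    have hℓ' := Finset.mem_range.mp hℓ
    rw [MvPolynomial.constantCoeff_smul, constantCoeff_z_of_pos F (by omega), smul_zero]

theorem coeff_single_one_zdown (i : ℕ+) : coeff (Finsupp.single i 1) (zdown F q i) = 1 := by
  obtain ⟨n, hn⟩ := Nat.exists_eq_add_one_of_ne_zero i.ne_zero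
  rw [hn, zdown, coeff_sum, Finset.sum_eq_single 0]
  · simp [coeff_single_one_z, hn]
  · intro ℓ _ hℓ
    rw [MvPolynomial.coeff_smul, coeff_single_one_z, if_neg (by omega), smul_zero]
  · simp

theorem zvee_mem_weightedDegreeLE (n : ℕ) : zvee F q n ∈ weightedDegreeLE F PNat.val n := by
  refine Submodule.smul_mem _ _ (Submodule.sum_mem _ fun k hk => Submodule.smul_mem _ _ ?_)
  have hkn : k + (n - k) = n := Nat.add_sub_cancel' (Nat.lt_succ_iff.mp (Finset.mem_range.mp hk))
  simpa only [hkn] using mul_mem_weightedDegreeLE (zdown_mem_weightedDegreeLE q k)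
    (zdown_mem_weightedDegreeLE q (n - k))

theorem constantCoeff_zvee_of_pos {n : ℕ} (hn : 0 < n) : constantCoeff (zvee F q n) = 0 := by
  have hterm : ∀ k, constantCoeff (zdown F q k * zdown F q (n - k)) = 0 := fun k => by
    rw [map_mul]
    rcases Nat.eq_zero_or_pos k with rfl | hk
    · rw [Nat.sub_zero, constantCoeff_zdown_of_pos q hn, mul_zero]
    · rw [constantCoeff_zdown_of_pos q hk, zero_mul]
  simp [zvee, MvPolynomial.constantCoeff_smul, hterm]

theorem coeff_single_one_zvee (i : ℕ+) :
    coeff (Finsupp.single i 1) (zvee F q i) =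
      (q + q⁻¹) ^ (i : ℕ) * (q ^ (i : ℕ) + q⁻¹ ^ (i : ℕ)) := by
  rw [zvee, MvPolynomial.coeff_smul, coeff_sum,
    Finset.sum_eq_add_of_mem 0 (i : ℕ) (by simp) (by simp) i.ne_zero.symm]
  · have hzpow : q ^ ((i : ℤ) - 2 * (i : ℤ)) = q⁻¹ ^ (i : ℕ) := by
      rw [show (i : ℤ) - 2 * (i : ℤ) = -(i : ℕ) by ring, zpow_neg, zpow_natCast, inv_pow]
    simp [MvPolynomial.coeff_smul, coeff_single_one_zdown, hzpow, mul_add]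
  · rintro k hk ⟨hk0, hki⟩
    have hk' := Finset.mem_range.mp hk
    rw [MvPolynomial.coeff_smul, coeff_single_one_mul, constantCoeff_zdown_of_pos q (by omega),
      constantCoeff_zdown_of_pos q (by omega), mul_zero, zero_mul, add_zero, smul_zero]

end

theorem zvee_degree_constant_and_top_coeff (q : F) (n : ℕ) (hn : 1 ≤ n) :
    (∀ d ∈ (zvee F q n).support, (d.sum fun i m => (i : ℕ) * m) ≤ n) ∧
    MvPolynomial.constantCoeff (zvee F q n) = 0 ∧
    MvPolynomial.coeff (Finsupp.single (⟨n, hn⟩ : ℕ+) 1) (zvee F q n)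
      = (q + q⁻¹) ^ n * (q ^ n + q⁻¹ ^ n) := by
  refine ⟨fun d hd => ?_, constantCoeff_zvee_of_pos q hn, coeff_single_one_zvee q ⟨n, hn⟩⟩
  simpa [Finsupp.weight_apply, mul_comm] using
    (mem_restrictSupport_iff _).mp (zvee_mem_weightedDegreeLE q n) hd
end
end

section
/- Let ∨ : F[z_1,z_2,...] → F[z_1,z_2,...] be the unique algebra homomorphism sending z_n ↦ z^∨_n for n ≥ 1. For every n ∈ ℕ, the image under ∨ of the subspace P_1 + P_2 + ... + P_n equals P_1 + P_2 + ... + P_n, where P_k is the homogeneous component of degree k of the grading with z_k of degree k. -/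
/-!
Order the monomials of `F[z_1, z_2, …]` by weight and, within one weight, by number of factors,
more factors being smaller. Then `z^∨_m = [2]_q^m (q^m + q^{-m}) z_m` plus non-constant terms that
are smaller: the `z_j` with `j < m` coming from `z↓_m`, and the products `z↓_k z↓_{m-k}`, which have
two factors and weight at most `m`. The leading coefficient is nonzero because `q` is not a root of
unity, and leading terms multiply, so `∨` sends each monomial to a nonzero multiple of itself plus
smaller non-constant monomials. A map that is triangular for a well-founded order maps the span of
any set of basis vectors containing the lower terms of its members onto itself; the non-constant
monomials of weight at most `n` form such a set.
-/

noncomputable section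

open PowerSeries

variable (F : Type*) [Field F]

/-- The algebra homomorphism `∨` sending `z_n ↦ z^∨_n` for `n ≥ 1`. -/
def veeHom (q : F) : MvPolynomial ℕ+ F →ₐ[F] MvPolynomial ℕ+ F :=
  MvPolynomial.aeval fun i : ℕ+ => zvee F q (i : ℕ)

theorem Submodule.map_span_eq_of_triangular {K V ι : Type*} [Field K] [AddCommGroup V]
    [Module K V] {r : ι → ι → Prop} (hr : WellFounded r) (T : V →ₗ[K] V) (b : ι → V)
    (D : Set ι)
    (hT : ∀ i ∈ D, ∃ c : K, c ≠ 0 ∧ T (b i) - c • b i ∈ span K (b '' {j ∈ D | r j i})) :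
    (span K (b '' D)).map T = span K (b '' D) := by
  have hlower : ∀ i, span K (b '' {j ∈ D | r j i}) ≤ span K (b '' D) :=
    fun i => span_mono (Set.image_mono fun j hj => hj.1)
  refine le_antisymm ?_ ?_
  · rw [map_span_le]
    rintro _ ⟨i, hi, rfl⟩
    obtain ⟨c, -, hc⟩ := hT i hi
    simpa using add_mem (hlower i hc) (smul_mem _ c (subset_span ⟨i, hi, rfl⟩))
  · rw [span_le]
    rintro _ ⟨i, hi, rfl⟩
    induction i using hr.induction with
    | _ i ih =>
      obtain ⟨c, hc0, hc⟩ := hT i hi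
      have hrest : T (b i) - c • b i ∈ (span K (b '' D)).map T :=
        span_le.2 (by rintro _ ⟨j, hj, rfl⟩; exact ih j hj.2 hj.1) hc
      have himage : T (b i) ∈ (span K (b '' D)).map T := mem_map_of_mem (subset_span ⟨i, hi, rfl⟩)
      have : b i = c⁻¹ • (T (b i) - (T (b i) - c • b i)) := by
        rw [sub_sub_cancel, inv_smul_smul₀ hc0]
      rw [this]
      exact smul_mem _ _ (sub_mem himage hrest)

theorem add_inv_ne_zero_of_pow_four_ne_one {K : Type*} [Field K] {x : K} (hx : x ≠ 0)
    (h4 : x ^ 4 ≠ 1) : x + x⁻¹ ≠ 0 := by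
  intro h
  have hsq : x ^ 2 = -1 := by
    field_simp at h
    linear_combination h
  exact h4 (by rw [show 4 = 2 * 2 from rfl, pow_mul, hsq]; norm_num)

open scoped Pointwise
open Finsupp (weight)

namespace MvPolynomial

theorem mul_mem_restrictSupport {σ R : Type*} [CommSemiring R] {s t u : Set (σ →₀ ℕ)}
    {p p' : MvPolynomial σ R} (hp : p ∈ restrictSupport R s) (hp' : p' ∈ restrictSupport R t)
    (hu : s + t ⊆ u) : p * p' ∈ restrictSupport R u :=
  restrictSupport_mono R hu (restrictSupport_add R s t ▸ Submodule.mul_mem_mul hp hp')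

theorem sum_weightedHomogeneousSubmodule_eq_restrictSupport {σ M R : Type*} [CommSemiring R]
    [AddCommMonoid M] (w : σ → M) (s : Finset M) :
    ∑ m ∈ s, weightedHomogeneousSubmodule R w m = restrictSupport R {d | weight w d ∈ s} := by
  classical
  induction s using Finset.induction_on with
  | empty => simp [restrictSupport_eq_span]
  | insert m s hm ih =>
    have hcomp : weightedHomogeneousSubmodule R w m = restrictSupport R {d | weight w d = m} :=
      weightedHomogeneousSubmodule_eq_finsupp_supported R w m
    rw [Finset.sum_insert hm, ih, hcomp, restrictSupport_eq_span, restrictSupport_eq_span,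
      restrictSupport_eq_span, Submodule.add_eq_sup, ← Submodule.span_union, ← Set.image_union]
    congr
    ext d
    simp

end MvPolynomial

namespace Vee

open MvPolynomial

variable {F}

/-- The second component is `weight - degree`, so among monomials of equal weight those with more
factors are smaller. -/
def key (d : ℕ+ →₀ ℕ) : Lex (ℕ × ℕ) :=
  toLex (weight (fun i : ℕ+ => (i : ℕ)) d, weight (fun i : ℕ+ => (i : ℕ) - 1) d)

lemma key_add (d e : ℕ+ →₀ ℕ) : key (d + e) = key d + key e := by
  simp [key, ← toLex_add]

lemma key_single_one (i : ℕ+) : key (Finsupp.single i 1) = toLex ((i : ℕ), (i : ℕ) - 1) := by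
  simp [key, Finsupp.weight_single]

def keyBelow (a : Lex (ℕ × ℕ)) : Set (ℕ+ →₀ ℕ) := {e | e ≠ 0 ∧ key e < a}

lemma keyBelow_add_subset (a b : Lex (ℕ × ℕ)) :
    keyBelow a + {e | key e ≤ b} ⊆ keyBelow (a + b) := by
  rintro _ ⟨e, ⟨he0, hea⟩, e', he'b, rfl⟩
  refine ⟨fun h => he0 (add_eq_zero.1 h).1, ?_⟩
  rw [key_add]
  exact add_lt_add_of_lt_of_le hea he'b

lemma monomial_mem_restrictSupport_key_le (d : ℕ+ →₀ ℕ) (c : F) :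
    monomial d c ∈ restrictSupport F {e | key e ≤ key d} :=
  (monomial_mem_restrictSupport F).2 (Or.inl (show key d ≤ key d from le_rfl))

def HasLeadingMonomial (p : MvPolynomial ℕ+ F) (d : ℕ+ →₀ ℕ) : Prop :=
  ∃ c : F, c ≠ 0 ∧ p - c • monomial d 1 ∈ restrictSupport F (keyBelow (key d))

namespace HasLeadingMonomial

lemma mem_restrictSupport {p : MvPolynomial ℕ+ F} {d : ℕ+ →₀ ℕ} (h : HasLeadingMonomial p d) :
    p ∈ restrictSupport F {e | key e ≤ key d} := by
  obtain ⟨c, -, hc⟩ := h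
  simpa [smul_monomial] using add_mem (restrictSupport_mono F (fun e he => he.2.le) hc)
    (monomial_mem_restrictSupport_key_le d c)

lemma one : HasLeadingMonomial (1 : MvPolynomial ℕ+ F) 0 :=
  ⟨1, one_ne_zero, by simp⟩

lemma mul {p p' : MvPolynomial ℕ+ F} {d d' : ℕ+ →₀ ℕ} (h : HasLeadingMonomial p d)
    (h' : HasLeadingMonomial p' d') : HasLeadingMonomial (p * p') (d + d') := by
  obtain ⟨c, hc0, hc⟩ := h
  obtain ⟨c', hc0', hc'⟩ := h'
  refine ⟨c * c', mul_ne_zero hc0 hc0', ?_⟩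
  have hsplit : p * p' - (c * c') • monomial (d + d') 1 =
      (p - c • monomial d 1) * p' + c • ((p' - c' • monomial d' 1) * monomial d 1) := by
    rw [add_comm d, ← one_mul (1 : F), ← monomial_mul]
    simp only [MvPolynomial.smul_eq_C_mul, map_mul]
    ring_nf
  rw [hsplit, key_add]
  refine add_mem (mul_mem_restrictSupport hc (mem_restrictSupport ⟨c', hc0', hc'⟩)
    (keyBelow_add_subset _ _)) (Submodule.smul_mem _ c (mul_mem_restrictSupport hc'
      (monomial_mem_restrictSupport_key_le d 1) ?_))
  rw [add_comm (key d)]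
  exact keyBelow_add_subset _ _

lemma pow {p : MvPolynomial ℕ+ F} {d : ℕ+ →₀ ℕ} (h : HasLeadingMonomial p d) (k : ℕ) :
    HasLeadingMonomial (p ^ k) (k • d) := by
  induction k with
  | zero => simpa using one
  | succ k ih => simpa [pow_succ, succ_nsmul] using ih.mul h

end HasLeadingMonomial

lemma weight_mem_Icc_of_mem_keyBelow {d e : ℕ+ →₀ ℕ} (he : e ∈ keyBelow (key d)) :
    weight (fun i : ℕ+ => (i : ℕ)) e ∈ Finset.Icc 1 (weight (fun i : ℕ+ => (i : ℕ)) d) := by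
  obtain ⟨he0, hed⟩ := he
  have := Finsupp.nonTorsionWeight_of ℕ (fun i : ℕ+ => (i : ℕ)) fun i => i.ne_zero
  have hpos : weight (fun i : ℕ+ => (i : ℕ)) e ≠ 0 :=
    (Finsupp.weight_eq_zero_iff_eq_zero _).not.2 he0
  rw [key, key, Prod.Lex.toLex_lt_toLex] at hed
  simp only [Finset.mem_Icc]
  omega

lemma zdown_zero (q : F) : zdown F q 0 = 1 := rfl

lemma z_eq_monomial {j : ℕ} (hj : 0 < j) : z F j = monomial (Finsupp.single ⟨j, hj⟩ 1) 1 := by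
  cases j with
  | zero => omega
  | succ j => rfl

lemma z_mem_restrictSupport {j : ℕ} (hj : 0 < j) {s : Set (ℕ+ →₀ ℕ)}
    (hs : ∀ e : ℕ+ →₀ ℕ, e ≠ 0 → key e = toLex (j, j - 1) → e ∈ s) :
    z F j ∈ restrictSupport F s := by
  rw [z_eq_monomial hj]
  exact (monomial_mem_restrictSupport F).2
    (Or.inl (hs _ (Finsupp.single_ne_zero.2 one_ne_zero) (key_single_one _)))

variable (q : F)

lemma zdown_succ_mem (n : ℕ) :
    zdown F q (n + 1) ∈ restrictSupport F {e | e ≠ 0 ∧ key e ≤ toLex (n + 1, n)} := by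
  refine Submodule.sum_mem _ fun ℓ hℓ => Submodule.smul_mem _ _ ?_
  have hℓ : ℓ ≤ n / 2 := Nat.lt_succ_iff.1 (Finset.mem_range.1 hℓ)
  refine z_mem_restrictSupport (by omega) fun e he0 he => ⟨he0, ?_⟩
  rw [he, Prod.Lex.toLex_le_toLex]
  omega

lemma zdown_succ_sub_z_mem (n : ℕ) :
    zdown F q (n + 1) - z F (n + 1) ∈ restrictSupport F (keyBelow (toLex (n + 1, n))) := by
  rw [zdown, Finset.sum_range_succ']
  simp only [pow_zero, Nat.choose_zero_right, Nat.cast_one, mul_one, mul_zero, Nat.sub_zero,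
    one_smul, add_sub_cancel_right]
  refine Submodule.sum_mem _ fun ℓ hℓ => Submodule.smul_mem _ _ ?_
  have hℓ : ℓ < n / 2 := Finset.mem_range.1 hℓ
  refine z_mem_restrictSupport (by omega) fun e he0 he => ⟨he0, ?_⟩
  rw [he, Prod.Lex.toLex_lt_toLex]
  omega

lemma zvee_succ_sub_smul_z_mem (n : ℕ) :
    zvee F q (n + 1) - ((q + q⁻¹) ^ (n + 1) * (q ^ (n + 1) + (q ^ (n + 1))⁻¹)) • z F (n + 1) ∈
      restrictSupport F (keyBelow (toLex (n + 1, n))) := by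
  set B := restrictSupport F (keyBelow (toLex (n + 1, n)))
  have hmid : ∀ k ∈ Finset.range n, zdown F q (k + 1) * zdown F q (n - k) ∈ B := by
    intro k hk
    have hk : k < n := Finset.mem_range.1 hk
    rw [show n - k = (n - k - 1) + 1 by omega]
    refine mul_mem_restrictSupport (zdown_succ_mem q k) (zdown_succ_mem q (n - k - 1)) ?_
    rintro _ ⟨e, ⟨he0, he⟩, e', ⟨-, he'⟩, rfl⟩
    refine ⟨fun h => he0 (add_eq_zero.1 h).1, ?_⟩
    calc key (e + e') = key e + key e' := key_add e e'
      _ ≤ toLex (k + 1, k) + toLex (n - k - 1 + 1, n - k - 1) := add_le_add he he'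
      _ < toLex (n + 1, n) := by
        rw [← toLex_add, Prod.Lex.toLex_lt_toLex]
        simp only [Prod.mk_add_mk]
        omega
  have hsplit : zvee F q (n + 1) = (q + q⁻¹) ^ (n + 1) •
      (∑ k ∈ Finset.range n, (q ^ (((n + 1 : ℕ) : ℤ) - 2 * ((k + 1 : ℕ) : ℤ))) •
        (zdown F q (k + 1) * zdown F q (n - k)) +
        (q ^ (n + 1) + (q ^ (n + 1))⁻¹) • zdown F q (n + 1)) := by
    have hfirst : q ^ (((n + 1 : ℕ) : ℤ) - 2 * ((0 : ℕ) : ℤ)) = q ^ (n + 1) := by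
      rw [Nat.cast_zero, mul_zero, sub_zero, zpow_natCast]
    have hlast : q ^ (((n + 1 : ℕ) : ℤ) - 2 * ((n + 1 : ℕ) : ℤ)) = (q ^ (n + 1))⁻¹ := by
      rw [← zpow_natCast, ← zpow_neg]
      congr 1
      ring
    rw [zvee, Finset.sum_range_succ, Finset.sum_range_succ', hfirst, hlast, Nat.sub_self,
      Nat.sub_zero]
    simp only [zdown_zero, mul_one, one_mul, Nat.add_sub_add_right]
    module
  rw [hsplit, mul_smul, ← smul_sub, add_sub_assoc, ← smul_sub]
  exact Submodule.smul_mem _ _ (add_mem (Submodule.sum_mem _ fun k hk => Submodule.smul_mem _ _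
    (hmid k hk)) (Submodule.smul_mem _ _ (zdown_succ_sub_z_mem q n)))

variable {q}

lemma hasLeadingMonomial_zvee (hq0 : q ≠ 0) (hq : ∀ n : ℕ, 0 < n → q ^ n ≠ 1) (i : ℕ+) :
    HasLeadingMonomial (zvee F q i) (Finsupp.single i 1) := by
  have hc : ∀ m : ℕ, 0 < m → q ^ m + (q ^ m)⁻¹ ≠ 0 := fun m hm =>
    add_inv_ne_zero_of_pow_four_ne_one (pow_ne_zero m hq0)
      (by rw [← pow_mul]; exact hq (m * 4) (by omega))
  obtain ⟨n, rfl⟩ : ∃ n : ℕ, i = n.succPNat := ⟨i.natPred, (PNat.succPNat_natPred i).symm⟩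
  refine ⟨(q + q⁻¹) ^ (n + 1) * (q ^ (n + 1) + (q ^ (n + 1))⁻¹),
    mul_ne_zero (pow_ne_zero _ ?_) (hc (n + 1) n.succ_pos), ?_⟩
  · simpa using hc 1 one_pos
  · rw [key_single_one]
    exact zvee_succ_sub_smul_z_mem q n

lemma hasLeadingMonomial_veeHom_monomial (hq0 : q ≠ 0) (hq : ∀ n : ℕ, 0 < n → q ^ n ≠ 1)
    (d : ℕ+ →₀ ℕ) : HasLeadingMonomial (veeHom F q (monomial d 1)) d := by
  induction d using Finsupp.induction_linear with
  | zero => simpa using HasLeadingMonomial.one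
  | add d e hd he =>
    rw [← one_mul (1 : F), ← MvPolynomial.monomial_mul, map_mul]
    exact hd.mul he
  | single i k =>
    rw [← X_pow_eq_monomial, map_pow, veeHom, aeval_X, ← Finsupp.smul_single_one]
    exact (hasLeadingMonomial_zvee hq0 hq i).pow k

end Vee

open MvPolynomial Vee

/-- For every `n`, the image under `∨` of `P_1 + ⋯ + P_n` equals `P_1 + ⋯ + P_n`, where
`P_k` is the homogeneous component of degree `k` (with `z_k` of degree `k`). -/
theorem veeHom_map_sum_components (q : F) (hq0 : q ≠ 0)
    (hq : ∀ n : ℕ, 0 < n → q ^ n ≠ 1) (n : ℕ) :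
    Submodule.map (veeHom F q).toLinearMap
        (∑ k ∈ Finset.Icc 1 n,
          MvPolynomial.weightedHomogeneousSubmodule F (fun i : ℕ+ => (i : ℕ)) k)
      = ∑ k ∈ Finset.Icc 1 n,
          MvPolynomial.weightedHomogeneousSubmodule F (fun i : ℕ+ => (i : ℕ)) k := by
  rw [sum_weightedHomogeneousSubmodule_eq_restrictSupport, restrictSupport_eq_span]
  refine Submodule.map_span_eq_of_triangular (InvImage.wf key wellFounded_lt) _ _ _
    fun d hd => ?_
  obtain ⟨c, hc0, hc⟩ := hasLeadingMonomial_veeHom_monomial hq0 hq d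
  refine ⟨c, hc0, ?_⟩
  rw [← restrictSupport_eq_span]
  refine restrictSupport_mono F ?_ hc
  intro e he
  exact ⟨Finset.Icc_subset_Icc_right (Finset.mem_Icc.1 hd).2 (weight_mem_Icc_of_mem_keyBelow he),
    he.2⟩
end
end
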